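/- Let n ≥ 3 and 0 ≤ r < n. Let A be a symmetric n×n matrix over a field K with more than 2 elements, written in block form A = [[a, L, b],[L^T, B, C],[b, C^T, c]] with B an (n-2)×(n-2) symmetric matrix. Let d ∈ K and let N be the symmetric matrix with entries N_{1,n} = N_{n,1} = 1, N_{n,n} = d, and all other entries 0. If rank(A + tN) ≤ r for all t ∈ K, then rank(B) ≤ r - 2. -/

import Mathlib

/-!
Order the indices as (middle, first, last). Then `A + tN` contains the principal submatrix
`[[B, X], [Xᵀ, D + tE]]`, where the columns of `X` are `Lᵀ` and `C`, `D = !![a, b; b, c]` and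
`E = !![0, 1; 1, d]`. If a column of `X` lies outside the column space of `B`, then, `B` being
symmetric, the matching row of `Xᵀ` lies outside its row space, and bordering `B` by both raises
the rank by two, whatever `t` is. Otherwise `X = B Y`, and the kernel of the block matrix embeds
into the kernel of `B` as soon as the Schur complement `D + tE - Yᵀ B Y` is invertible; its
determinant is a quadratic in `t` with leading coefficient `-1`, which has a non-root because
`|K| > 2`.
-/

open Matrix

open Cardinal Polynomial in
lemma exists_sq_add_mul_add_ne_zero {R : Type*} [CommRing R] [IsDomain R] (hR : 2 < #R)
    (b c : R) : ∃ t : R, t ^ 2 + b * t + c ≠ 0 := by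
  have hdeg : (X ^ 2 + C b * X + C c : R[X]).natDegree = 2 := by
    simpa using natDegree_quadratic (R := R) (a := 1) (b := b) (c := c) one_ne_zero
  obtain ⟨t, ht⟩ := exists_eval_ne_zero_of_natDegree_lt_card (X ^ 2 + C b * X + C c)
    (fun h => by simp [h] at hdeg) (by rw [hdeg]; exact_mod_cast hR)
  exact ⟨t, by simpa using ht⟩

open Cardinal in
lemma Matrix.exists_det_add_smul_ne_zero {R : Type*} [CommRing R] [IsDomain R] (hR : 2 < #R)
    (S : Matrix (Fin 2) (Fin 2) R) (d : R) :
    ∃ t : R, (S + t • !![0, 1; 1, d]).det ≠ 0 := by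
  obtain ⟨t, ht⟩ := exists_sq_add_mul_add_ne_zero hR (S 0 1 + S 1 0 - S 0 0 * d)
    (S 0 1 * S 1 0 - S 0 0 * S 1 1)
  refine ⟨t, fun h => ht ?_⟩
  rw [det_fin_two] at h
  simp only [Matrix.add_apply, Matrix.smul_apply, of_apply, cons_val', cons_val_zero,
    cons_val_one, cons_val_fin_one, smul_eq_mul] at h
  linear_combination -h

section
variable {K m n p q : Type*} [Field K] [Fintype m] [Fintype n] [Fintype p] [Fintype q]

lemma Matrix.rank_add_card_le_of_ker (M : Matrix m m K) (B : Matrix n n K)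
    (f : (m → K) →ₗ[K] (n → K)) (hf : ∀ v, M *ᵥ v = 0 → B *ᵥ f v = 0)
    (hinj : ∀ v, M *ᵥ v = 0 → f v = 0 → v = 0) :
    B.rank + Fintype.card m ≤ M.rank + Fintype.card n := by
  have hker : Module.finrank K (LinearMap.ker M.mulVecLin)
      ≤ Module.finrank K (LinearMap.ker B.mulVecLin) := by
    refine LinearMap.finrank_le_finrank_of_injective (f := f.restrict fun v hv => hf v hv) ?_
    exact (injective_iff_map_eq_zero _).mpr fun ⟨v, hv⟩ h =>
      Subtype.ext (hinj v hv (congrArg Subtype.val h))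
  have hM := M.mulVecLin.finrank_range_add_finrank_ker
  have hB := B.mulVecLin.finrank_range_add_finrank_ker
  rw [Module.finrank_fintype_fun_eq_card] at hM hB
  rw [Matrix.rank, Matrix.rank]
  omega

lemma Matrix.rank_add_card_le_rank_fromBlocks [DecidableEq m] (B : Matrix n n K)
    (Y : Matrix n m K) (Z : Matrix m n K) (D : Matrix m m K) (hS : (D - Z * B * Y).det ≠ 0) :
    B.rank + Fintype.card m ≤ (fromBlocks B (B * Y) (Z * B) D).rank := by
  have hker : ∀ w x, fromBlocks B (B * Y) (Z * B) D *ᵥ Sum.elim w x = 0 →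
      B *ᵥ (w + Y *ᵥ x) = 0 ∧ (D - Z * B * Y) *ᵥ x = 0 := by
    intro w x hv
    rw [fromBlocks_mulVec, Sum.elim_comp_inl, Sum.elim_comp_inr, ← Sum.elim_zero_zero,
      Sum.elim_eq_iff] at hv
    have htop : B *ᵥ (w + Y *ᵥ x) = 0 := by rw [mulVec_add, mulVec_mulVec, hv.1]
    refine ⟨htop, ?_⟩
    calc (D - Z * B * Y) *ᵥ x = (Z * B) *ᵥ w + D *ᵥ x - Z *ᵥ (B *ᵥ (w + Y *ᵥ x)) := by
          rw [sub_mulVec, mulVec_add, mulVec_add, ← mulVec_mulVec, ← mulVec_mulVec,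
            ← mulVec_mulVec]
          abel
      _ = 0 := by rw [hv.2, htop, mulVec_zero, sub_zero]
  have key := rank_add_card_le_of_ker (fromBlocks B (B * Y) (Z * B) D) B
    (LinearMap.funLeft K K Sum.inl + Y.mulVecLin ∘ₗ LinearMap.funLeft K K Sum.inr) ?_ ?_
  · rw [Fintype.card_sum] at key
    omega
  · intro v hv
    rw [← Sum.elim_comp_inl_inr v] at hv
    exact (hker _ _ hv).1
  · intro v hv hfv
    rw [← Sum.elim_comp_inl_inr v] at hv ⊢
    have hx := eq_zero_of_mulVec_eq_zero hS (hker _ _ hv).2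
    change v ∘ Sum.inl + Y *ᵥ (v ∘ Sum.inr) = 0 at hfv
    rw [hx, mulVec_zero, add_zero] at hfv
    rw [hfv, hx, Sum.elim_zero_zero]

lemma Matrix.rank_add_one_le_rank_fromCols (B : Matrix m n K) (X : Matrix m q K) {j : q}
    (hj : X.col j ∉ Submodule.span K (Set.range B.col)) :
    B.rank + 1 ≤ (fromCols B X).rank := by
  rw [rank_eq_finrank_span_cols, rank_eq_finrank_span_cols,
    ← Submodule.finrank_sup_span_singleton hj]
  refine Submodule.finrank_mono (sup_le (Submodule.span_mono ?_) ?_)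
  · rintro _ ⟨i, rfl⟩
    exact ⟨Sum.inl i, rfl⟩
  · exact (Submodule.span_singleton_le_iff_mem _ _).mpr
      (Submodule.subset_span ⟨Sum.inr j, rfl⟩)

lemma Matrix.rank_add_one_le_rank_fromRows (A : Matrix m n K) (R : Matrix p n K) {i : p}
    (hi : R.row i ∉ Submodule.span K (Set.range A.row)) :
    A.rank + 1 ≤ (fromRows A R).rank := by
  rw [← rank_transpose, ← rank_transpose (fromRows A R), transpose_fromRows]
  exact rank_add_one_le_rank_fromCols Aᵀ Rᵀ hi

lemma Matrix.rank_add_two_le_rank_fromBlocks (B : Matrix m n K) (X : Matrix m q K)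
    (Y : Matrix p n K) (D : Matrix p q K) {i : p} {j : q}
    (hX : X.col j ∉ Submodule.span K (Set.range B.col))
    (hY : Y.row i ∉ Submodule.span K (Set.range B.row)) :
    B.rank + 2 ≤ (fromBlocks B X Y D).rank := by
  have hrow : (fromCols Y D).row i ∉ Submodule.span K (Set.range (fromCols B X).row) := by
    intro h
    have := Submodule.mem_map_of_mem (f := LinearMap.funLeft K K Sum.inl) h
    rw [Submodule.map_span, ← Set.range_comp] at this
    exact hY this
  rw [← fromRows_fromCols_eq_fromBlocks]
  exact (Nat.add_le_add_right (rank_add_one_le_rank_fromCols B X hX) 1).trans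
    (rank_add_one_le_rank_fromRows _ _ hrow)

end

lemma Matrix.exists_mul_eq_of_col_mem_span {R m n q : Type*} [CommSemiring R] [Fintype n]
    {B : Matrix m n R} {X : Matrix m q R}
    (hX : ∀ j, X.col j ∈ Submodule.span R (Set.range B.col)) :
    ∃ Y : Matrix n q R, B * Y = X := by
  simp_rw [← range_mulVecLin] at hX
  choose y hy using hX
  exact ⟨(of y)ᵀ, by ext i j; exact congrFun (hy j) i⟩

open Cardinal in
theorem Matrix.exists_rank_add_two_le_rank_fromBlocks_add_smul {K ι : Type*} [Field K]
    [Fintype ι] (hK : 2 < #K) {B : Matrix ι ι K} (hB : Bᵀ = B) (X : Matrix ι (Fin 2) K)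
    (D : Matrix (Fin 2) (Fin 2) K) (d : K) :
    ∃ t : K, B.rank + 2 ≤ (fromBlocks B X Xᵀ (D + t • !![0, 1; 1, d])).rank := by
  by_cases hX : ∀ j, X.col j ∈ Submodule.span K (Set.range B.col)
  · obtain ⟨Y, rfl⟩ := exists_mul_eq_of_col_mem_span hX
    obtain ⟨t, ht⟩ := exists_det_add_smul_ne_zero hK (D - Yᵀ * B * Y) d
    refine ⟨t, ?_⟩
    rw [transpose_mul, hB]
    simpa using rank_add_card_le_rank_fromBlocks B Y Yᵀ (D + t • !![0, 1; 1, d])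
      (by rwa [add_sub_right_comm])
  · obtain ⟨j, hj⟩ := not_forall.mp hX
    refine ⟨0, rank_add_two_le_rank_fromBlocks B X Xᵀ _ hj (i := j) ?_⟩
    rwa [← hB] at hj

theorem symmetric_corner_lemma (K : Type*) [Field K] (hK : 2 < Cardinal.mk K)
    (n r : ℕ) (hn : 3 ≤ n)
    (A : Matrix (Fin n) (Fin n) K) (hSym : Aᵀ = A) (d : K)
    (hrk : ∀ t : K,
      (A + t • (Matrix.single (⟨0, by omega⟩ : Fin n) (⟨n - 1, by omega⟩ : Fin n) (1 : K)
        + Matrix.single (⟨n - 1, by omega⟩ : Fin n) (⟨0, by omega⟩ : Fin n) (1 : K)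
        + Matrix.single (⟨n - 1, by omega⟩ : Fin n) (⟨n - 1, by omega⟩ : Fin n) d)).rank ≤ r) :
    (A.submatrix
      (fun i : Fin (n - 2) => (⟨i.1 + 1, by have := i.2; omega⟩ : Fin n))
      (fun j : Fin (n - 2) => (⟨j.1 + 1, by have := j.2; omega⟩ : Fin n))).rank ≤ r - 2 := by
  let mid : Fin (n - 2) → Fin n := fun i => ⟨i.1 + 1, by omega⟩
  let ends : Fin 2 → Fin n := ![⟨0, by omega⟩, ⟨n - 1, by omega⟩]
  show (A.submatrix mid mid).rank ≤ r - 2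
  obtain ⟨t, ht⟩ := exists_rank_add_two_le_rank_fromBlocks_add_smul hK
    (B := A.submatrix mid mid) (by rw [transpose_submatrix, hSym]) (A.submatrix mid ends)
    (A.submatrix ends ends) d
  refine Nat.le_sub_of_add_le <| ht.trans <| (congrArg rank ?_).trans_le <|
    (rank_submatrix_le _ (Sum.elim mid ends) (Sum.elim mid ends)).trans (hrk t)
  rw [transpose_submatrix, hSym]
  have hn1 : n - 1 ≠ 0 := by omega
  have hmid : ∀ i : Fin (n - 2), n ≠ i.1 + 2 := fun i => by omega
  ext (i | i) (j | j) <;>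
    simp only [submatrix_apply, Sum.elim_inl, Sum.elim_inr, fromBlocks_apply₁₁,
      fromBlocks_apply₁₂, fromBlocks_apply₂₁, fromBlocks_apply₂₂, Matrix.add_apply,
      Matrix.smul_apply]
  · simp [mid, Fin.ext_iff, hmid]
  · fin_cases j <;> simp [mid, ends, Fin.ext_iff, hmid, hn1, hn1.symm]
  · fin_cases i <;> simp [mid, ends, Fin.ext_iff, hmid, hn1, hn1.symm]
  · fin_cases i <;> fin_cases j <;> simp [ends, Fin.ext_iff, hn1, hn1.symm]
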